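/- Let ρ ∈ E be nonzero and let K > 0. Then there exist C > 0 and θ₀ ∈ (0,1) such that for every θ ∈ (0, θ₀] and all vectors a, c ∈ E satisfying ‖a‖ ≥ θ^{−2}, ‖c‖ ≤ K, and ∠(a, ρ) ≤ θ, one has | ‖a‖ − ‖a − c‖ − ⟨ρ/‖ρ‖, c⟩ | ≤ C·θ. -/

import Mathlib

/-!
Writing `x̂ = ‖x‖⁻¹ • x`, split `‖a‖ - ‖a - c‖ - ⟪ρ̂, c⟫` into the radial error
`‖a‖ - ‖a - c‖ - ⟪â, c⟫`, which is `O(‖c‖² / ‖a‖) = O(θ²)` after rationalising the difference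
of norms, and `⟪â - ρ̂, c⟫`, which is `O(θ)` because the chord `‖â - ρ̂‖` between unit vectors
is at most the angle `∠(a, ρ)`.
-/

open RealInnerProductSpace InnerProductGeometry

section

variable {E : Type*} [NormedAddCommGroup E] [InnerProductSpace ℝ E]

theorem norm_sub_le_angle_of_norm_eq_one {x y : E} (hx : ‖x‖ = 1) (hy : ‖y‖ = 1) :
    ‖x - y‖ ≤ angle x y := by
  have hsq : ‖x - y‖ ^ 2 ≤ angle x y ^ 2 := by
    rw [sq, norm_sub_sq_eq_norm_sq_add_norm_sq_sub_two_mul_norm_mul_norm_mul_cos_angle, hx, hy]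
    linarith [Real.one_sub_sq_div_two_le_cos (x := angle x y)]
  exact (pow_le_pow_iff_left₀ (norm_nonneg _) (angle_nonneg x y) two_ne_zero).mp hsq

theorem norm_inv_smul_sub_inv_smul_le_angle {x y : E} (hx : x ≠ 0) (hy : y ≠ 0) :
    ‖‖x‖⁻¹ • x - ‖y‖⁻¹ • y‖ ≤ angle x y := by
  have hx' : 0 < ‖x‖⁻¹ := by positivity
  have hy' : 0 < ‖y‖⁻¹ := by positivity
  simpa [angle_smul_left_of_pos _ _ hx', angle_smul_right_of_pos _ _ hy'] using
    norm_sub_le_angle_of_norm_eq_one (norm_smul_inv_norm (𝕜 := ℝ) hx)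
      (norm_smul_inv_norm (𝕜 := ℝ) hy)

theorem abs_norm_mul_norm_sub_norm_sub_sub_inner_le (a c : E) :
    |‖a‖ * (‖a‖ - ‖a - c‖) - ⟪a, c⟫| ≤ 2 * ‖c‖ ^ 2 := by
  rcases eq_or_ne a 0 with rfl | ha
  · simp
  set N := ‖a‖
  set M := ‖a - c‖
  have hN : 0 < N := norm_pos_iff.mpr ha
  have hM : 0 ≤ M := norm_nonneg _
  -- Multiplying by `N + M` turns `N - M` into `(N² - M²) / (N + M)`, where the main terms cancel.
  have hmul : (N + M) * (N * (N - M) - ⟪a, c⟫) = (N - M) * ⟪a, c⟫ - N * ‖c‖ ^ 2 := by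
    have hlaw : M ^ 2 = N ^ 2 - 2 * ⟪a, c⟫ + ‖c‖ ^ 2 := norm_sub_sq_real a c
    linear_combination (-N) * hlaw
  have hdiff : |N - M| ≤ ‖c‖ := by
    simpa using abs_norm_sub_norm_le a (a - c)
  have hinner : |⟪a, c⟫| ≤ N * ‖c‖ := abs_real_inner_le_norm a c
  have hbound : (N + M) * |N * (N - M) - ⟪a, c⟫| ≤ (N + M) * (2 * ‖c‖ ^ 2) := by
    rw [← abs_of_nonneg (by positivity : 0 ≤ N + M), ← abs_mul, hmul,
      abs_of_nonneg (by positivity : 0 ≤ N + M)]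
    calc |(N - M) * ⟪a, c⟫ - N * ‖c‖ ^ 2| ≤ |(N - M) * ⟪a, c⟫| + |N * ‖c‖ ^ 2| := abs_sub _ _
      _ = |N - M| * |⟪a, c⟫| + N * ‖c‖ ^ 2 := by
          rw [abs_mul, abs_of_nonneg (by positivity : 0 ≤ N * ‖c‖ ^ 2)]
      _ ≤ ‖c‖ * (N * ‖c‖) + N * ‖c‖ ^ 2 := by gcongr
      _ ≤ (N + M) * (2 * ‖c‖ ^ 2) := by nlinarith [sq_nonneg ‖c‖]
  exact le_of_mul_le_mul_left hbound (by positivity)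

theorem abs_norm_sub_norm_sub_sub_inner_inv_smul_le {a : E} (ha : a ≠ 0) (c : E) :
    |‖a‖ - ‖a - c‖ - ⟪‖a‖⁻¹ • a, c⟫| ≤ 2 * ‖c‖ ^ 2 / ‖a‖ := by
  have hN : 0 < ‖a‖ := norm_pos_iff.mpr ha
  have heq : ‖a‖ - ‖a - c‖ - ⟪‖a‖⁻¹ • a, c⟫ = (‖a‖ * (‖a‖ - ‖a - c‖) - ⟪a, c⟫) / ‖a‖ := by
    rw [real_inner_smul_left]
    field_simp
  rw [heq, abs_div, abs_of_pos hN]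
  gcongr
  exact abs_norm_mul_norm_sub_norm_sub_sub_inner_le a c

end

theorem norm_sub_norm_sub_approx_direction_general {E : Type*} [NormedAddCommGroup E]
    [InnerProductSpace ℝ E]
    (ρ : E) (hρ : ρ ≠ 0) (K : ℝ) (hK : 0 < K) :
    ∃ C > (0 : ℝ), ∃ θ₀ ∈ Set.Ioo (0 : ℝ) 1, ∀ θ ∈ Set.Ioc (0 : ℝ) θ₀, ∀ a c : E,
      θ ^ (-2 : ℤ) ≤ ‖a‖ → ‖c‖ ≤ K → InnerProductGeometry.angle a ρ ≤ θ →
      |‖a‖ - ‖a - c‖ - ⟪‖ρ‖⁻¹ • ρ, c⟫| ≤ C * θ := by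
  refine ⟨2 * K ^ 2 + K, by positivity, 1 / 2, ⟨by norm_num, by norm_num⟩, ?_⟩
  rintro θ ⟨hθ, hθ_le⟩ a c hnorm hc hangle
  have hθa : (θ ^ 2)⁻¹ ≤ ‖a‖ := by simpa [zpow_neg] using hnorm
  have ha : 0 < ‖a‖ := (by positivity : 0 < (θ ^ 2)⁻¹).trans_le hθa
  have hradial : |‖a‖ - ‖a - c‖ - ⟪‖a‖⁻¹ • a, c⟫| ≤ 2 * K ^ 2 * θ ^ 2 := by
    refine (abs_norm_sub_norm_sub_sub_inner_inv_smul_le (norm_pos_iff.mp ha) c).trans ?_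
    rw [div_eq_mul_inv]
    gcongr
    exact inv_le_of_inv_le₀ (by positivity) hθa
  have hdirection : |⟪‖a‖⁻¹ • a - ‖ρ‖⁻¹ • ρ, c⟫| ≤ θ * K :=
    (abs_real_inner_le_norm _ _).trans <| mul_le_mul
      ((norm_inv_smul_sub_inv_smul_le_angle (norm_pos_iff.mp ha) hρ).trans hangle) hc
      (norm_nonneg _) hθ.le
  calc |‖a‖ - ‖a - c‖ - ⟪‖ρ‖⁻¹ • ρ, c⟫|
      = |(‖a‖ - ‖a - c‖ - ⟪‖a‖⁻¹ • a, c⟫) + ⟪‖a‖⁻¹ • a - ‖ρ‖⁻¹ • ρ, c⟫| := by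
        rw [inner_sub_left]; ring_nf
    _ ≤ 2 * K ^ 2 * θ ^ 2 + θ * K := (abs_add_le _ _).trans (add_le_add hradial hdirection)
    _ ≤ 2 * K ^ 2 * θ + θ * K := by gcongr; nlinarith
    _ = (2 * K ^ 2 + K) * θ := by ring

/-- If `ρ ≠ 0` and `K > 0`, then there are `C > 0` and `θ₀ ∈ (0,1)` such that for all
`θ ∈ (0, θ₀]` and all `a, c` with `‖a‖ ≥ θ⁻²`, `‖c‖ ≤ K` and `∠(a,ρ) ≤ θ`, one has
`|‖a‖ − ‖a − c‖ − ⟨ρ/‖ρ‖, c⟩| ≤ Cθ`. -/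
theorem norm_sub_norm_sub_approx_direction {E : Type*} [NormedAddCommGroup E]
    [InnerProductSpace ℝ E] [FiniteDimensional ℝ E]
    (ρ : E) (hρ : ρ ≠ 0) (K : ℝ) (hK : 0 < K) :
    ∃ C > (0 : ℝ), ∃ θ₀ ∈ Set.Ioo (0 : ℝ) 1, ∀ θ ∈ Set.Ioc (0 : ℝ) θ₀, ∀ a c : E,
      θ ^ (-2 : ℤ) ≤ ‖a‖ → ‖c‖ ≤ K → InnerProductGeometry.angle a ρ ≤ θ →
      |‖a‖ - ‖a - c‖ - ⟪‖ρ‖⁻¹ • ρ, c⟫| ≤ C * θ :=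
  norm_sub_norm_sub_approx_direction_general ρ hρ K hK
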